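/- Let V₁,…,V_n ⊆ ℝ^ℓ be k-bounded subspaces with an (α,δ)-system S = (S₁,…,S_w) such that for every set Sⱼ and every pair {i₁,i₂} ⊆ Sⱼ, the spaces V_{i₁} and V_{i₂} are τ-separated. Then dim(V₁ + ⋯ + V_n) ≤ αk/(τδ). -/

import Mathlib

/-!
Choose an orthonormal basis of each `V i` and let `Φ : ℝ^Γ → ℝ^ℓ` send the standard basis vector
`e γ` to the `γ`-th vector of these bases, so that `dim (⨆ i, V i) = dim (ker Φ)ᗮ`. If each `e γ`
is congruent modulo `ker Φ` to a vector `r γ`, Bessel's inequality for an orthonormal basis of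
`(ker Φ)ᗮ` gives `dim (ker Φ)ᗮ ≤ ∑ ‖r γ‖²`.

To find `r γ` for a basis vector `u ∈ V i`, use the at least `δ n` sets `S j ∋ i`; separation forces
them to be triples `{i, p, q}`, and writes `u = x + y` with `x ∈ V p`, `y ∈ V q` and
`τ (‖x‖² + ‖y‖²) ≤ 1`. Averaging the coefficient vectors of these decompositions over `j` gives
`‖r γ‖² ≤ α / (τ δ n)`: each block of coordinates `i' ≠ i` is touched by at most `α` of the sets.
Summing over the at most `n k` basis vectors gives the bound.
-/

open Finset RealInnerProductSpace

def TauSeparated {ℓ : ℕ} (τ : ℝ) (V V' : Submodule ℝ (EuclideanSpace ℝ (Fin ℓ))) : Prop :=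
  ∀ v ∈ V, ∀ v' ∈ V', ‖v‖ = 1 → ‖v'‖ = 1 → |⟪v, v'⟫| ≤ 1 - τ

/-- `S` is an `(α,δ)`-system of the list of spaces `V`. -/
def IsADSystem {ℓ n w : ℕ} (α : ℕ) (δ : ℝ)
    (V : Fin n → Submodule ℝ (EuclideanSpace ℝ (Fin ℓ))) (S : Fin w → Finset (Fin n)) : Prop :=
  (∀ j, (S j).card = 2 ∨ (S j).card = 3) ∧
  (∀ j, ∀ i₁ ∈ S j, ∀ i₂ ∈ S j, ∀ i₃ ∈ S j, i₁ ≠ i₂ → i₁ ≠ i₃ → i₂ ≠ i₃ →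
      V i₁ ≤ V i₂ ⊔ V i₃) ∧
  (∀ j, (S j).card = 2 → ∀ i₁ ∈ S j, ∀ i₂ ∈ S j, V i₁ = V i₂) ∧
  (∀ i : Fin n, δ * n ≤ ((Finset.univ.filter fun j => i ∈ S j).card : ℝ)) ∧
  (∀ i₁ i₂ : Fin n, i₁ ≠ i₂ →
      (Finset.univ.filter fun j => i₁ ∈ S j ∧ i₂ ∈ S j).card ≤ α)

open Module Submodule

section RankBound

variable {ι : Type*} [Fintype ι]

theorem finrank_orthogonal_le_sum_norm_sq {F : Type*} [NormedAddCommGroup F]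
    [InnerProductSpace ℝ F] [FiniteDimensional ℝ F] (e : OrthonormalBasis ι ℝ F)
    (W : Submodule ℝ F) (r : ι → F) (hr : ∀ i, e i - r i ∈ W) :
    (finrank ℝ Wᗮ : ℝ) ≤ ∑ i, ‖r i‖ ^ 2 := by
  let g := stdOrthonormalBasis ℝ Wᗮ
  let f : Fin (finrank ℝ Wᗮ) → F := fun s => g s
  have hf : Orthonormal ℝ f := g.orthonormal.comp_linearIsometry Wᗮ.subtypeₗᵢ
  have hinner : ∀ i s, ⟪e i, f s⟫ = ⟪r i, f s⟫ := fun i s => by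
    have := inner_right_of_mem_orthogonal (hr i) (g s).2
    rwa [inner_sub_left, sub_eq_zero] at this
  calc (finrank ℝ Wᗮ : ℝ) = ∑ s, ‖f s‖ ^ 2 := by simp [hf.1]
    _ = ∑ i, ∑ s, ⟪r i, f s⟫ ^ 2 := by
      simp_rw [← e.sum_sq_inner_right, hinner]
      exact sum_comm
    _ ≤ ∑ i, ‖r i‖ ^ 2 := sum_le_sum fun i _ => by
      simpa [real_inner_comm] using hf.sum_inner_products_le (r i) (s := univ)

theorem finrank_span_le_sum_norm_sq [DecidableEq ι] {E : Type*} [AddCommGroup E] [Module ℝ E]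
    (b : ι → E) (r : ι → EuclideanSpace ℝ ι) (hr : ∀ i, ∑ j, r i j • b j = b i) :
    (finrank ℝ (span ℝ (Set.range b)) : ℝ) ≤ ∑ i, ‖r i‖ ^ 2 := by
  let Φ := Fintype.linearCombination ℝ b ∘ₗ (WithLp.linearEquiv 2 ℝ (ι → ℝ)).toLinearMap
  have hrange : LinearMap.range Φ = span ℝ (Set.range b) := by
    rw [LinearMap.range_comp, LinearEquiv.range, Submodule.map_top, Fintype.range_linearCombination]
  have hker : ∀ i, EuclideanSpace.basisFun ι ℝ i - r i ∈ LinearMap.ker Φ := fun i => by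
    simp [Φ, Fintype.linearCombination_apply, sub_smul, sum_sub_distrib, hr]
  have hdim : finrank ℝ (LinearMap.range Φ) = finrank ℝ (LinearMap.ker Φ)ᗮ := by
    have := Φ.finrank_range_add_finrank_ker
    have := (LinearMap.ker Φ).finrank_add_finrank_orthogonal
    omega
  rw [← hrange, hdim]
  exact finrank_orthogonal_le_sum_norm_sq _ _ _ hker

theorem norm_sum_sq_le_mul_sum_norm_sq_of_card_filter_le {κ : Type*} (T : Finset κ)
    (z : κ → EuclideanSpace ℝ ι) (m : ℕ) (hm : ∀ a, #{j ∈ T | z j a ≠ 0} ≤ m) :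
    ‖∑ j ∈ T, z j‖ ^ 2 ≤ m * ∑ j ∈ T, ‖z j‖ ^ 2 := by
  simp_rw [EuclideanSpace.real_norm_sq_eq, WithLp.ofLp_sum, Finset.sum_apply]
  rw [sum_comm, mul_sum]
  refine sum_le_sum fun a _ => ?_
  calc (∑ j ∈ T, z j a) ^ 2 = (∑ j ∈ T with z j a ≠ 0, z j a) ^ 2 := by rw [sum_filter_ne_zero]
    _ ≤ #{j ∈ T | z j a ≠ 0} * ∑ j ∈ T with z j a ≠ 0, z j a ^ 2 := sq_sum_le_card_mul_sum_sq
    _ ≤ m * ∑ j ∈ T, z j a ^ 2 := by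
      gcongr
      · exact hm a
      · exact filter_subset _ _

end RankBound

namespace TauSeparated

variable {ℓ : ℕ} {τ : ℝ} {V V' : Submodule ℝ (EuclideanSpace ℝ (Fin ℓ))}
  {x y : EuclideanSpace ℝ (Fin ℓ)}

theorem abs_inner_le (h : TauSeparated τ V V') (hx : x ∈ V) (hy : y ∈ V') :
    |⟪x, y⟫| ≤ (1 - τ) * (‖x‖ * ‖y‖) := by
  rcases eq_or_ne x 0 with rfl | hx0
  · simp
  rcases eq_or_ne y 0 with rfl | hy0
  · simp
  have hxy := h _ (V.smul_mem ‖x‖⁻¹ hx) _ (V'.smul_mem ‖y‖⁻¹ hy)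
    (norm_smul_inv_norm hx0) (norm_smul_inv_norm hy0)
  rw [real_inner_smul_left, real_inner_smul_right, abs_mul, abs_mul, abs_inv, abs_inv,
    abs_norm, abs_norm, ← mul_assoc, ← mul_inv, inv_mul_le_iff₀ (by positivity)] at hxy
  linarith

theorem disjoint (h : TauSeparated τ V V') (hτ : 0 < τ) : Disjoint V V' := by
  rw [disjoint_def]
  intro x hx hx'
  have := h.abs_inner_le hx hx'
  rw [real_inner_self_eq_norm_mul_norm, abs_of_nonneg (by positivity)] at this
  by_contra hx0
  nlinarith [mul_pos hτ (mul_self_pos.2 (norm_ne_zero_iff.2 hx0))]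

theorem mul_add_norm_sq_le (h : TauSeparated τ V V') (hx : x ∈ V) (hy : y ∈ V')
    (hx0 : x ≠ 0) (hy0 : y ≠ 0) : τ * (‖x‖ ^ 2 + ‖y‖ ^ 2) ≤ ‖x + y‖ ^ 2 := by
  have hinner := h.abs_inner_le hx hy
  have hτ : 0 ≤ 1 - τ :=
    nonneg_of_mul_nonneg_left ((abs_nonneg _).trans hinner) (by positivity)
  have hxy := abs_le.1 hinner
  rw [norm_add_sq_real]
  nlinarith [mul_nonneg hτ (sq_nonneg (‖x‖ - ‖y‖))]

end TauSeparated

theorem exists_add_eq_of_le_sup {ℓ : ℕ} {τ : ℝ} (hτ : 0 < τ)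
    {U V V' : Submodule ℝ (EuclideanSpace ℝ (Fin ℓ))} (hUV : TauSeparated τ U V)
    (hUV' : TauSeparated τ U V') (hVV' : TauSeparated τ V V') (hle : U ≤ V ⊔ V')
    {u : EuclideanSpace ℝ (Fin ℓ)} (hu : u ∈ U) :
    ∃ x ∈ V, ∃ y ∈ V', x + y = u ∧ τ * (‖x‖ ^ 2 + ‖y‖ ^ 2) ≤ ‖u‖ ^ 2 := by
  obtain ⟨x, hx, y, hy, rfl⟩ := mem_sup.1 (hle hu)
  refine ⟨x, hx, y, hy, rfl, ?_⟩
  rcases eq_or_ne x 0 with rfl | hx0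
  · obtain rfl : y = 0 := disjoint_def.1 (hUV'.disjoint hτ) y (by simpa using hu) hy
    simp
  rcases eq_or_ne y 0 with rfl | hy0
  · obtain rfl : x = 0 := disjoint_def.1 (hUV.disjoint hτ) x (by simpa using hu) hx
    simp
  exact hVV'.mul_add_norm_sq_le hx hy hx0 hy0

section Blocks

variable {ι E : Type*} [NormedAddCommGroup E] [InnerProductSpace ℝ E] (V : ι → Submodule ℝ E)

abbrev BlockIndex := (i : ι) × Fin (finrank ℝ (V i))

theorem card_blockIndex_le [Fintype ι] {k : ℕ} (hk : ∀ i, finrank ℝ (V i) ≤ k) :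
    Fintype.card (BlockIndex V) ≤ Fintype.card ι * k := by
  simpa [Fintype.card_sigma] using sum_le_card_nsmul univ _ k fun i _ => hk i

variable [FiniteDimensional ℝ E]

noncomputable def blockBasis (γ : BlockIndex V) : E := stdOrthonormalBasis ℝ (V γ.1) γ.2

theorem blockBasis_mem (γ : BlockIndex V) : blockBasis V γ ∈ V γ.1 :=
  (stdOrthonormalBasis ℝ (V γ.1) γ.2).2

theorem orthonormal_blockBasis (i : ι) : Orthonormal ℝ fun c => blockBasis V ⟨i, c⟩ :=
  (stdOrthonormalBasis ℝ (V i)).orthonormal.comp_linearIsometry (V i).subtypeₗᵢ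

theorem norm_blockBasis (γ : BlockIndex V) : ‖blockBasis V γ‖ = 1 :=
  (orthonormal_blockBasis V γ.1).1 γ.2

variable [DecidableEq ι]

noncomputable def blockCoord (i : ι) (x : E) : EuclideanSpace ℝ (BlockIndex V) :=
  WithLp.toLp 2 fun γ => if γ.1 = i then ⟪blockBasis V γ, x⟫ else 0

variable {V}

theorem blockCoord_apply_of_ne {i : ι} (x : E) {γ : BlockIndex V} (h : γ.1 ≠ i) :
    blockCoord V i x γ = 0 :=
  if_neg h

variable [Fintype ι]

theorem sum_blockCoord_smul {i : ι} {x : E} (hx : x ∈ V i) :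
    ∑ γ, blockCoord V i x γ • blockBasis V γ = x := by
  rw [← univ_sigma_univ, sum_sigma, sum_eq_single i (fun i' _ h => by simp [blockCoord, h])
    (by simp)]
  simpa [blockCoord, blockBasis, coe_inner] using
    congrArg Subtype.val ((stdOrthonormalBasis ℝ (V i)).sum_repr' ⟨x, hx⟩)

theorem norm_blockCoord_sq_le (i : ι) (x : E) : ‖blockCoord V i x‖ ^ 2 ≤ ‖x‖ ^ 2 := by
  rw [EuclideanSpace.real_norm_sq_eq, ← univ_sigma_univ, sum_sigma,
    sum_eq_single i (fun i' _ h => by simp [blockCoord, h]) (by simp)]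
  simpa [blockCoord, sq_abs] using (orthonormal_blockBasis V i).sum_inner_products_le x (s := univ)

theorem norm_blockCoord_add_sq_le {p q : ι} (hpq : p ≠ q) (x y : E) :
    ‖blockCoord V p x + blockCoord V q y‖ ^ 2 ≤ ‖x‖ ^ 2 + ‖y‖ ^ 2 := by
  have horth : ⟪blockCoord V p x, blockCoord V q y⟫ = 0 := by
    refine sum_eq_zero fun γ _ => ?_
    by_cases hγ : γ.1 = p
    · simp [blockCoord, hγ, hpq]
    · simp [blockCoord, hγ]
  rw [norm_add_sq_real, horth]
  linarith [norm_blockCoord_sq_le (V := V) p x, norm_blockCoord_sq_le (V := V) q y]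

variable (V)

theorem span_range_blockBasis : span ℝ (Set.range (blockBasis V)) = ⨆ i, V i := by
  refine le_antisymm (span_le.2 ?_) (iSup_le fun i x hx => ?_)
  · rintro _ ⟨γ, rfl⟩
    exact mem_iSup_of_mem γ.1 (blockBasis_mem V γ)
  · rw [← sum_blockCoord_smul hx]
    exact sum_mem fun γ _ => smul_mem _ _ (subset_span ⟨γ, rfl⟩)

end Blocks

namespace IsADSystem

variable {ℓ n w α : ℕ} {δ τ : ℝ} {V : Fin n → Submodule ℝ (EuclideanSpace ℝ (Fin ℓ))}
  {S : Fin w → Finset (Fin n)}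

theorem exists_pair_le_sup (hS : IsADSystem α δ V S) (hτ : 0 < τ) {i : Fin n} {j : Fin w}
    (hsep : ∀ i₁ ∈ S j, ∀ i₂ ∈ S j, i₁ ≠ i₂ → TauSeparated τ (V i₁) (V i₂))
    (hij : i ∈ S j) (hVi : V i ≠ ⊥) :
    ∃ p ∈ S j, ∃ q ∈ S j, p ≠ q ∧ p ≠ i ∧ q ≠ i ∧ V i ≤ V p ⊔ V q := by
  rcases hS.1 j with hcard | hcard
  · obtain ⟨i', hi', hne⟩ := exists_mem_ne (by omega : 1 < (S j).card) i
    have hVeq := hS.2.2.1 j hcard i hij i' hi'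
    have hdisj := (hsep i hij i' hi' hne.symm).disjoint hτ
    rw [hVeq, disjoint_self] at hdisj
    exact absurd (hVeq.trans hdisj) hVi
  · obtain ⟨p, q, hpq, hpair⟩ :=
      card_eq_two.1 (by rw [card_erase_of_mem hij, hcard] : ((S j).erase i).card = 2)
    obtain ⟨hpi, hp⟩ := mem_erase.1 (hpair ▸ mem_insert_self p {q})
    obtain ⟨hqi, hq⟩ := mem_erase.1 (hpair ▸ mem_insert_of_mem (mem_singleton_self q))
    exact ⟨p, hp, q, hq, hpq, hpi, hqi, hS.2.1 j i hij p hp q hq hpi.symm hqi.symm hpq⟩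

theorem exists_blockCoeffs_of_mem (hS : IsADSystem α δ V S) (hτ : 0 < τ) {i : Fin n} {j : Fin w}
    (hsep : ∀ i₁ ∈ S j, ∀ i₂ ∈ S j, i₁ ≠ i₂ → TauSeparated τ (V i₁) (V i₂))
    (hij : i ∈ S j) {u : EuclideanSpace ℝ (Fin ℓ)} (hu : u ∈ V i) (hu0 : u ≠ 0) :
    ∃ z : EuclideanSpace ℝ (BlockIndex V), ∑ γ, z γ • blockBasis V γ = u ∧
      τ * ‖z‖ ^ 2 ≤ ‖u‖ ^ 2 ∧ ∀ γ, z γ ≠ 0 → γ.1 ≠ i ∧ γ.1 ∈ S j := by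
  have hVi : V i ≠ ⊥ := fun h => hu0 ((mem_bot ℝ).1 (h ▸ hu))
  obtain ⟨p, hp, q, hq, hpq, hpi, hqi, hle⟩ := hS.exists_pair_le_sup hτ hsep hij hVi
  obtain ⟨x, hx, y, hy, rfl, hxy⟩ := exists_add_eq_of_le_sup hτ (hsep i hij p hp hpi.symm)
    (hsep i hij q hq hqi.symm) (hsep p hp q hq hpq) hle hu
  refine ⟨blockCoord V p x + blockCoord V q y, ?_, ?_, fun γ hγ => ?_⟩
  · simp only [PiLp.add_apply, add_smul, sum_add_distrib, sum_blockCoord_smul hx,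
      sum_blockCoord_smul hy]
  · exact (mul_le_mul_of_nonneg_left (norm_blockCoord_add_sq_le hpq x y) hτ.le).trans hxy
  · have : γ.1 = p ∨ γ.1 = q := by
      by_contra! h
      simp [blockCoord_apply_of_ne _ h.1, blockCoord_apply_of_ne _ h.2] at hγ
    rcases this with h | h <;> rw [h] <;> tauto

theorem exists_blockCoeffs_norm_sq_le (hS : IsADSystem α δ V S) (hδ : 0 < δ) (hτ : 0 < τ)
    (hsep : ∀ j, ∀ i₁ ∈ S j, ∀ i₂ ∈ S j, i₁ ≠ i₂ → TauSeparated τ (V i₁) (V i₂))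
    {i : Fin n} {u : EuclideanSpace ℝ (Fin ℓ)} (hu : u ∈ V i) :
    ∃ r : EuclideanSpace ℝ (BlockIndex V), ∑ γ, r γ • blockBasis V γ = u ∧
      ‖r‖ ^ 2 ≤ α * ‖u‖ ^ 2 / (τ * (δ * n)) := by
  rcases eq_or_ne u 0 with rfl | hu0
  · exact ⟨0, by simp, by simp⟩
  set J := ({j | i ∈ S j} : Finset (Fin w))
  have hJ : δ * n ≤ #J := hS.2.2.2.1 i
  have hδn : 0 < δ * n := mul_pos hδ (Nat.cast_pos.2 i.pos)
  have hJpos : (0 : ℝ) < #J := hδn.trans_le hJ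
  have hz : ∀ j ∈ J, ∃ z : EuclideanSpace ℝ (BlockIndex V), ∑ γ, z γ • blockBasis V γ = u ∧
      τ * ‖z‖ ^ 2 ≤ ‖u‖ ^ 2 ∧ ∀ γ, z γ ≠ 0 → γ.1 ≠ i ∧ γ.1 ∈ S j :=
    fun j hj => hS.exists_blockCoeffs_of_mem hτ (hsep j) (mem_filter.1 hj).2 hu hu0
  choose! z hz_sum hz_norm hz_supp using hz
  -- A coordinate in a block `γ.1 ≠ i` is used only by the `≤ α` sets containing `i` and `γ.1`.
  have hoverlap : ∀ γ, #{j ∈ J | z j γ ≠ 0} ≤ α := by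
    intro γ
    by_cases hγ : γ.1 = i
    · rw [filter_false_of_mem fun j hj hne => (hz_supp j hj γ hne).1 hγ, card_empty]
      exact Nat.zero_le α
    · refine (card_le_card fun j hj => ?_).trans (hS.2.2.2.2 i γ.1 (Ne.symm hγ))
      obtain ⟨hjJ, hne⟩ := mem_filter.1 hj
      exact mem_filter.2 ⟨mem_univ j, (mem_filter.1 hjJ).2, (hz_supp j hjJ γ hne).2⟩
  have hsum_norm : ‖∑ j ∈ J, z j‖ ^ 2 ≤ α * (#J * (‖u‖ ^ 2 / τ)) := by
    refine (norm_sum_sq_le_mul_sum_norm_sq_of_card_filter_le J z α hoverlap).trans ?_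
    gcongr
    simpa using sum_le_sum fun j hj => (le_div_iff₀' hτ).2 (hz_norm j hj)
  refine ⟨(#J : ℝ)⁻¹ • ∑ j ∈ J, z j, ?_, ?_⟩
  · simp_rw [PiLp.smul_apply, WithLp.ofLp_sum, Finset.sum_apply, smul_eq_mul, mul_smul,
      ← smul_sum, sum_smul]
    rw [sum_comm, sum_congr rfl hz_sum, sum_const, ← Nat.cast_smul_eq_nsmul ℝ, smul_smul,
      inv_mul_cancel₀ hJpos.ne', one_smul]
  · calc ‖(#J : ℝ)⁻¹ • ∑ j ∈ J, z j‖ ^ 2 = (#J : ℝ)⁻¹ ^ 2 * ‖∑ j ∈ J, z j‖ ^ 2 := by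
          rw [norm_smul, mul_pow, Real.norm_eq_abs, sq_abs]
      _ ≤ (#J : ℝ)⁻¹ ^ 2 * (α * (#J * (‖u‖ ^ 2 / τ))) := by gcongr
      _ = α * ‖u‖ ^ 2 / (τ * #J) := by field_simp
      _ ≤ α * ‖u‖ ^ 2 / (τ * (δ * n)) := by gcongr

end IsADSystem

theorem stmt_15 (ℓ n w α k : ℕ) (δ τ : ℝ) (hδ : 0 < δ) (hτ : 0 < τ)
    (V : Fin n → Submodule ℝ (EuclideanSpace ℝ (Fin ℓ)))
    (S : Fin w → Finset (Fin n))
    (hbd : ∀ i, Module.finrank ℝ (V i) ≤ k)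
    (hS : IsADSystem α δ V S)
    (hsep : ∀ j, ∀ i₁ ∈ S j, ∀ i₂ ∈ S j, i₁ ≠ i₂ → TauSeparated τ (V i₁) (V i₂)) :
    (Module.finrank ℝ ↥(⨆ i, V i) : ℝ) ≤ α * k / (τ * δ) := by
  have hr : ∀ γ : BlockIndex V, ∃ r : EuclideanSpace ℝ (BlockIndex V),
      ∑ γ', r γ' • blockBasis V γ' = blockBasis V γ ∧ ‖r‖ ^ 2 ≤ α / (τ * (δ * n)) := fun γ => by
    simpa [norm_blockBasis] using hS.exists_blockCoeffs_norm_sq_le hδ hτ hsep (blockBasis_mem V γ)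
  choose r hr_sum hr_norm using hr
  have hcard : (Fintype.card (BlockIndex V) : ℝ) ≤ n * k := by
    exact_mod_cast (card_blockIndex_le V hbd).trans_eq (by rw [Fintype.card_fin])
  rw [← span_range_blockBasis]
  calc (finrank ℝ (span ℝ (Set.range (blockBasis V))) : ℝ) ≤ ∑ γ, ‖r γ‖ ^ 2 :=
        finrank_span_le_sum_norm_sq _ r hr_sum
    _ ≤ Fintype.card (BlockIndex V) * (α / (τ * (δ * n))) :=
        (sum_le_sum fun γ _ => hr_norm γ).trans_eq (by rw [sum_const, card_univ, nsmul_eq_mul])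
    _ = Fintype.card (BlockIndex V) / n * (α / (τ * δ)) := by ring
    _ ≤ k * (α / (τ * δ)) := by
        gcongr
        exact div_le_of_le_mul₀ (by positivity) (by positivity) (by linarith)
    _ = α * k / (τ * δ) := by ring
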